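/- If q + r is odd, then the linear system L_{(2,q+2r−1)}(2^q, 3^r) on ℙ¹×ℙ¹ is nonempty: writing q + r = 2k+1, for any q + r points p₁,…,p_{q+r} in general position there is a nonzero polynomial of bidegree at most (2, q+2r−1) of the form f²·g, where f has bidegree at most (1,k) and vanishes at all the points, and g has bidegree at most (0,r) and vanishes at the last r points; the product vanishes to order ≥ 2 at the first q points and order ≥ 3 at the last r points. -/
import Mathlib


open MvPolynomial

def VanishesToOrder {K : Type*} [CommRing K] (f : MvPolynomial (Fin 2) K)
    (p : Fin 2 → K) (m : ℕ) : Prop :=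
  ∀ α β : ℕ, α + β < m →
    MvPolynomial.eval p
      ((fun g => MvPolynomial.pderiv (0 : Fin 2) g)^[α]
        ((fun g => MvPolynomial.pderiv (1 : Fin 2) g)^[β] f)) = 0

/-- `f` has bidegree at most `(d, e)`. -/
def BidegLE {K : Type*} [CommRing K] (f : MvPolynomial (Fin 2) K)
    (d e : ℕ) : Prop :=
  ∀ mon ∈ f.support, mon 0 ≤ d ∧ mon 1 ≤ e

lemma exists_ker {K : Type*} [Field K] {ι : Type*} [Fintype ι] {m : ℕ}
    (h : m < Fintype.card ι) (φ : (ι → K) →ₗ[K] (Fin m → K)) :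
    ∃ c : ι → K, c ≠ 0 ∧ φ c = 0 := by
  by_contra hc
  push_neg at hc
  have hker : LinearMap.ker φ = ⊥ := by
    by_contra hk
    obtain ⟨x, hx, hx0⟩ := (Submodule.ne_bot_iff _).1 hk
    exact hc x hx0 (LinearMap.mem_ker.1 hx)
  have hinj : Function.Injective φ := LinearMap.ker_eq_bot.1 hker
  have := LinearMap.finrank_le_finrank_of_injective hinj
  rw [Module.finrank_fintype_fun_eq_card, Module.finrank_fintype_fun_eq_card,
    Fintype.card_fin] at this
  omega

lemma exists_vanishing {K : Type*} [Field K] {ι : Type*} [Fintype ι] [DecidableEq ι]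
    (μ : ι → (Fin 2 →₀ ℕ)) (hμ : Function.Injective μ)
    {m : ℕ} (hm : m < Fintype.card ι) (P : Fin m → Fin 2 → K) :
    ∃ f : MvPolynomial (Fin 2) K, f ≠ 0 ∧
      (∀ mon ∈ f.support, ∃ i, mon = μ i) ∧
      (∀ j, eval (P j) f = 0) := by
  let φ : (ι → K) →ₗ[K] (Fin m → K) :=
    { toFun := fun c j => ∑ i, c i * eval (P j) (monomial (μ i) (1 : K))
      map_add' := by
        intro a b; funext j; simp [add_mul, Finset.sum_add_distrib]
      map_smul' := by
        intro a b; funext j; simp [Finset.mul_sum, mul_assoc] }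
  obtain ⟨c, hc0, hcφ⟩ := exists_ker hm φ
  refine ⟨∑ i, monomial (μ i) (c i), ?_, ?_, ?_⟩
  · obtain ⟨i₀, hi₀⟩ : ∃ i, c i ≠ 0 := by
      by_contra h; push_neg at h; exact hc0 (funext h)
    intro hf0
    have : coeff (μ i₀) (∑ i, monomial (μ i) (c i)) = c i₀ := by
      rw [coeff_sum]
      rw [Finset.sum_eq_single i₀]
      · simp [coeff_monomial]
      · intro b _ hb
        rw [coeff_monomial, if_neg (fun h => hb (hμ h))]
      · simp
    rw [hf0] at this
    simp at this
    exact hi₀ this.symm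
  · intro mon hmon
    by_contra h
    push_neg at h
    have : coeff mon (∑ i, monomial (μ i) (c i)) = 0 := by
      rw [coeff_sum]
      apply Finset.sum_eq_zero
      intro i _
      rw [coeff_monomial, if_neg]
      exact fun he => h i he.symm
    exact (MvPolynomial.mem_support_iff.1 hmon) this
  · intro j
    have := congrFun hcφ j
    simp only [φ, LinearMap.coe_mk, AddHom.coe_mk, Pi.zero_apply] at this
    rw [map_sum]
    rw [← this]
    apply Finset.sum_congr rfl
    intro i _
    rw [eval_monomial, eval_monomial, one_mul]

lemma eval_ord2 {K : Type*} [CommRing K] (f g : MvPolynomial (Fin 2) K) (p : Fin 2 → K)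
    (hf : eval p f = 0) : VanishesToOrder (f ^ 2 * g) p 2 := by
  have h2 : f ^ 2 * g = f * f * g := by ring
  intro α β hab
  rw [h2]
  have hα : α ≤ 1 := by omega
  have hβ : β ≤ 1 := by omega
  interval_cases α <;> interval_cases β <;>
    first
      | (exfalso; omega)
      | simp [pderiv_mul, hf]

lemma eval_ord3 {K : Type*} [CommRing K] (f g : MvPolynomial (Fin 2) K) (p : Fin 2 → K)
    (hf : eval p f = 0) (hg : eval p g = 0) : VanishesToOrder (f ^ 2 * g) p 3 := by
  have h2 : f ^ 2 * g = f * f * g := by ring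
  intro α β hab
  rw [h2]
  have hα : α ≤ 2 := by omega
  have hβ : β ≤ 2 := by omega
  interval_cases α <;> interval_cases β <;>
    first
      | (exfalso; omega)
      | simp [pderiv_mul, hf, hg, Function.iterate_succ, Function.iterate_zero, mul_add,
          add_mul]

theorem system_2_q_plus_2r_sub1_nonempty {K : Type*} [Field K] [CharZero K]
    (q r k : ℕ) (hodd : q + r = 2 * k + 1) (hr : 1 ≤ r)
    (pts : Fin (q + r) → Fin 2 → K) :
    ∃ f g : MvPolynomial (Fin 2) K,
      f ≠ 0 ∧ g ≠ 0 ∧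
      BidegLE f 1 k ∧ BidegLE g 0 r ∧
      (∀ i, MvPolynomial.eval (pts i) f = 0) ∧
      (∀ i : Fin (q + r), q ≤ (i : ℕ) → MvPolynomial.eval (pts i) g = 0) ∧
      f ^ 2 * g ≠ 0 ∧
      BidegLE (f ^ 2 * g) 2 (q + 2 * r - 1) ∧
      (∀ i : Fin (q + r), (i : ℕ) < q → VanishesToOrder (f ^ 2 * g) (pts i) 2) ∧
      (∀ i : Fin (q + r), q ≤ (i : ℕ) → VanishesToOrder (f ^ 2 * g) (pts i) 3) := by
  -- construct f
  have cardf : q + r < Fintype.card (Fin 2 × Fin (k + 1)) := by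
    simp [Fintype.card_prod]; omega
  set μf : Fin 2 × Fin (k + 1) → (Fin 2 →₀ ℕ) :=
    fun ab => Finsupp.single 0 (ab.1 : ℕ) + Finsupp.single 1 (ab.2 : ℕ) with hμf
  have hμf0 : ∀ ab, μf ab 0 = (ab.1 : ℕ) := by
    intro ab; simp [hμf, Finsupp.single_apply]
  have hμf1 : ∀ ab, μf ab 1 = (ab.2 : ℕ) := by
    intro ab; simp [hμf, Finsupp.single_apply]
  have hμfinj : Function.Injective μf := by
    intro a b hab
    have h0 : (a.1 : ℕ) = (b.1 : ℕ) := by rw [← hμf0 a, ← hμf0 b, hab]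
    have h1 : (a.2 : ℕ) = (b.2 : ℕ) := by rw [← hμf1 a, ← hμf1 b, hab]
    exact Prod.ext (Fin.ext h0) (Fin.ext h1)
  obtain ⟨f, hf0, hfsupp, hfeval⟩ := exists_vanishing μf hμfinj cardf pts
  -- construct g
  have cardg : r < Fintype.card (Fin (r + 1)) := by simp
  set μg : Fin (r + 1) → (Fin 2 →₀ ℕ) := fun b => Finsupp.single 1 (b : ℕ) with hμg
  have hμginj : Function.Injective μg := by
    intro a b hab
    have : ((a : ℕ) : ℕ) = (b : ℕ) := by
      have := DFunLike.congr_fun hab (1 : Fin 2)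
      simpa [hμg, Finsupp.single_apply] using this
    exact Fin.ext this
  obtain ⟨g, hg0, hgsupp, hgeval⟩ :=
    exists_vanishing μg hμginj cardg (fun j : Fin r => pts ⟨q + j, by omega⟩)
  have hgeval' : ∀ i : Fin (q + r), q ≤ (i : ℕ) → eval (pts i) g = 0 := by
    intro i hi
    have := hgeval ⟨(i : ℕ) - q, by omega⟩
    have heq : (⟨q + ((i : ℕ) - q), by omega⟩ : Fin (q + r)) = i := by
      apply Fin.ext; simp; omega
    rwa [heq] at this
  -- bidegrees
  have hbf : BidegLE f 1 k := by
    intro mon hmon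
    obtain ⟨ab, hab⟩ := hfsupp mon hmon
    subst hab
    rw [hμf0, hμf1]
    exact ⟨Nat.lt_succ_iff.1 ab.1.isLt, Nat.lt_succ_iff.1 ab.2.isLt⟩
  have hbg : BidegLE g 0 r := by
    intro mon hmon
    obtain ⟨b, hb⟩ := hgsupp mon hmon
    subst hb
    constructor
    · simp [hμg, Finsupp.single_apply]
    · simp only [hμg, Finsupp.single_apply, if_pos rfl]
      exact Nat.lt_succ_iff.1 b.isLt
  have hprod0 : f ^ 2 * g ≠ 0 := mul_ne_zero (pow_ne_zero _ hf0) hg0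
  have hbprod : BidegLE (f ^ 2 * g) 2 (q + 2 * r - 1) := by
    intro mon hmon
    have h2 : f ^ 2 * g = f * f * g := by ring
    rw [h2] at hmon
    have hmem := MvPolynomial.support_mul _ _ hmon
    rw [Finset.mem_add] at hmem
    obtain ⟨a, ha, c, hc, hac⟩ := hmem
    have hmem2 := MvPolynomial.support_mul _ _ ha
    rw [Finset.mem_add] at hmem2
    obtain ⟨a1, ha1, a2, ha2, ha12⟩ := hmem2
    obtain ⟨h10, h11⟩ := hbf a1 ha1
    obtain ⟨h20, h21⟩ := hbf a2 ha2
    obtain ⟨hc0, hc1⟩ := hbg c hc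
    subst hac
    subst ha12
    constructor
    · simp only [Finsupp.add_apply]; omega
    · simp only [Finsupp.add_apply]; omega
  refine ⟨f, g, hf0, hg0, hbf, hbg, hfeval, hgeval', hprod0, hbprod, ?_, ?_⟩
  · intro i _
    exact eval_ord2 f g (pts i) (hfeval i)
  · intro i hi
    exact eval_ord3 f g (pts i) (hfeval i) (hgeval' i hi)
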